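/- arXiv:1504.03666 — 2 statements merged into one kernel-verified Lean document; each statement's English description precedes it below -/
import Mathlib

section
/- Let S be a cut of CC_k and let 0 ≤ i < k. If exactly one of rows i and i+1 is monochromatic with respect to S (and the other is bichromatic), then exactly one vertex x among {v_i, v_{i+1}, v'_i, v'_{i+1}} has a different S-membership than the other three, and cs(swap(S,i)) = cs(S) + 1 if x ∈ {v_i, v'_{i+1}}, while cs(swap(S,i)) = cs(S) − 1 if x ∈ {v_{i+1}, v'_i}. -/
/-- The cut size of a cut `S` of a finite simple graph `G`: the number of edges of `G` with
exactly one endpoint in `S` (counted as ordered pairs whose first component is in `S`). -/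
def cutSize {V : Type*} [Fintype V] [DecidableEq V] (G : SimpleGraph V) [DecidableRel G.Adj]
    (S : Finset V) : ℕ :=
  ((Finset.univ : Finset (V × V)).filter fun p => G.Adj p.1 p.2 ∧ p.1 ∈ S ∧ p.2 ∉ S).card

def ccRel (k : ℕ) : (Fin (k+1) ⊕ Fin (k+1)) → (Fin (k+1) ⊕ Fin (k+1)) → Prop
  | Sum.inl _, Sum.inl _ => True
  | Sum.inr _, Sum.inr _ => True
  | Sum.inl i, Sum.inr j => (j : ℕ) < (i : ℕ)
  | Sum.inr _, Sum.inl _ => False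

instance (k : ℕ) : DecidableRel (ccRel k) := fun u v =>
  match u, v with
  | Sum.inl _, Sum.inl _ => inferInstanceAs (Decidable True)
  | Sum.inr _, Sum.inr _ => inferInstanceAs (Decidable True)
  | Sum.inl i, Sum.inr j => inferInstanceAs (Decidable ((j : ℕ) < (i : ℕ)))
  | Sum.inr _, Sum.inl _ => inferInstanceAs (Decidable False)

/-- The graph `CC_k`: vertices `v_0,…,v_k` (encoded `Sum.inl i`) and `v'_0,…,v'_k`
(encoded `Sum.inr j`); each side is a clique and `v_i ~ v'_j` iff `j < i`. -/
def CCk (k : ℕ) : SimpleGraph (Fin (k+1) ⊕ Fin (k+1)) := SimpleGraph.fromRel (ccRel k)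

instance (k : ℕ) : DecidableRel (CCk k).Adj := fun u v =>
  inferInstanceAs (Decidable (u ≠ v ∧ (ccRel k u v ∨ ccRel k v u)))

/-- Row `i` of a cut `S` of `CC_k` is monochromatic: `v_i` and `v'_i` are both in `S` or
both not in `S` (otherwise the row is bichromatic). -/
def rowMono (k : ℕ) (S : Finset (Fin (k+1) ⊕ Fin (k+1))) (i : Fin (k+1)) : Prop :=
  (Sum.inl i ∈ S ↔ Sum.inr i ∈ S)

/-- `swap(S,i)`: the cut obtained from `S` by exchanging the memberships of `v_i` and
`v_{i+1}` and exchanging the memberships of `v'_i` and `v'_{i+1}`. -/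
def swapCut (k : ℕ) (S : Finset (Fin (k+1) ⊕ Fin (k+1))) (i : Fin k) :
    Finset (Fin (k+1) ⊕ Fin (k+1)) :=
  S.image ((Equiv.swap (Sum.inl i.castSucc : Fin (k+1) ⊕ Fin (k+1)) (Sum.inl i.succ)).trans
    (Equiv.swap (Sum.inr i.castSucc : Fin (k+1) ⊕ Fin (k+1)) (Sum.inr i.succ)))

/-- The four vertices of rows `i` and `i+1` of `CC_k`. -/
def quad (k : ℕ) (i : Fin k) : Finset (Fin (k+1) ⊕ Fin (k+1)) :=
  {Sum.inl i.castSucc, Sum.inl i.succ, Sum.inr i.castSucc, Sum.inr i.succ}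


/-!
Let `σ` exchange rows `i` and `i+1`. It is not an automorphism of `CC_k`, but it is one of
`CC_k` plus the missing edge `v_i v'_{i+1}`: it swaps that edge with the edge `v_{i+1} v'_i` and
preserves every other adjacency. Comparing the cut sizes of `S` and `σ S` in the enlarged graph,
and subtracting the added edge, gives
`cs(σ S) + [S separates v_{i+1}, v'_i] = cs(S) + [S separates v_i, v'_{i+1}]`.
If exactly one of the two rows is monochromatic, an odd number of the four vertices lies in `S`,
so one vertex `x` is the odd one out, and two of the four vertices are separated by `S` exactly
when one of them is `x`.
-/

open Finset SimpleGraph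

section CutSize

variable {V W : Type*} [Fintype V] [DecidableEq V] [Fintype W] [DecidableEq W]

theorem cutSize_map_iso {G : SimpleGraph V} {H : SimpleGraph W} [DecidableRel G.Adj]
    [DecidableRel H.Adj] (φ : G ≃g H) (S : Finset V) :
    cutSize H (S.image φ) = cutSize G S := by
  refine (card_equiv (φ.toEquiv.prodCongr φ.toEquiv) fun p => ?_).symm
  simp [φ.map_adj_iff]

theorem cutSize_sup_of_disjoint {G H : SimpleGraph V} [DecidableRel G.Adj] [DecidableRel H.Adj]
    (hGH : Disjoint G H) (S : Finset V) :
    cutSize (G ⊔ H) S = cutSize G S + cutSize H S := by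
  rw [cutSize, cutSize, cutSize, ← card_union_of_disjoint]
  · congr 1
    ext p
    simp [or_and_right]
  · exact disjoint_filter.2 fun p _ hG hH => disjoint_left.1 hGH _ _ hG.1 hH.1

theorem cutSize_edge (u v : V) (S : Finset V) :
    cutSize (edge u v) S = if u ∈ S ↔ v ∈ S then 0 else 1 := by
  by_cases huv : u = v
  · subst huv
    simp [cutSize, edge_self_eq_bot]
  have hpairs : (univ.filter fun p : V × V => (edge u v).Adj p.1 p.2 ∧ p.1 ∈ S ∧ p.2 ∉ S) =
      ({(u, v), (v, u)} : Finset (V × V)).filter fun p => p.1 ∈ S ∧ p.2 ∉ S := by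
    ext ⟨a, b⟩
    simp only [mem_filter, mem_univ, true_and, mem_insert, mem_singleton, Prod.mk.injEq, edge_adj]
    grind
  rw [cutSize, hpairs]
  by_cases hu : u ∈ S <;> by_cases hv : v ∈ S <;> simp [filter_insert, filter_singleton, hu, hv]

theorem cutSize_sup_edge {G : SimpleGraph V} [DecidableRel G.Adj] {u v : V} (h : ¬G.Adj u v)
    (S : Finset V) :
    cutSize (G ⊔ edge u v) S = cutSize G S + if u ∈ S ↔ v ∈ S then 0 else 1 := by
  rw [cutSize_sup_of_disjoint ((disjoint_edge G).2 h), cutSize_edge]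

end CutSize

section OddOneOut

variable {α : Type*}

def IsOddOneOut (q S : Finset α) (x : α) : Prop :=
  ∀ y ∈ q, y ≠ x → (y ∈ S ↔ x ∉ S)

variable {q S : Finset α} {x : α}

theorem IsOddOneOut.mem_iff_mem_iff (hx : IsOddOneOut q S x) {y z : α} (hy : y ∈ q) (hz : z ∈ q)
    (hyz : y ≠ z) : (y ∈ S ↔ z ∈ S) ↔ y ≠ x ∧ z ≠ x := by
  by_cases hyx : y = x
  · subst hyx
    have := hx z hz hyz.symm
    tauto
  by_cases hzx : z = x
  · subst hzx
    have := hx y hy hyz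
    tauto
  have := hx y hy hyx
  have := hx z hz hzx
  tauto

theorem IsOddOneOut.eq_of_three_le_card (hq : 3 ≤ #q) (hx : IsOddOneOut q S x) {x' : α}
    (hx'q : x' ∈ q) (hx' : IsOddOneOut q S x') : x' = x := by
  classical
  by_contra hne
  obtain ⟨z, hz⟩ : (q \ {x, x'}).Nonempty := by
    rw [← card_pos]
    have := le_card_sdiff {x, x'} q
    have := card_le_two (a := x) (b := x')
    omega
  simp only [mem_sdiff, mem_insert, mem_singleton, not_or] at hz
  have := hx z hz.1 hz.2.1
  have := hx' z hz.1 hz.2.2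
  have := hx x' hx'q hne
  tauto

theorem exists_isOddOneOut_of_not_iff_iff [DecidableEq α] {a b c d : α} {S : Finset α}
    (h : ¬((a ∈ S ↔ c ∈ S) ↔ (b ∈ S ↔ d ∈ S))) :
    ∃ x ∈ ({a, b, c, d} : Finset α), IsOddOneOut {a, b, c, d} S x := by
  simp only [IsOddOneOut, mem_insert, mem_singleton, exists_eq_or_imp, exists_eq_left,
    forall_eq_or_imp, forall_eq]
  by_cases ha : a ∈ S <;> by_cases hb : b ∈ S <;> by_cases hc : c ∈ S <;> by_cases hd : d ∈ S <;>
    simp_all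

end OddOneOut

namespace CCk

variable {k : ℕ} (i : Fin k)

theorem sup_edge_adj_inl_inl (a b : Fin (k+1)) :
    (CCk k ⊔ edge (Sum.inl i.castSucc) (Sum.inr i.succ)).Adj (Sum.inl a) (Sum.inl b) ↔ a ≠ b := by
  simp [CCk, ccRel, edge_adj]

theorem sup_edge_adj_inr_inr (a b : Fin (k+1)) :
    (CCk k ⊔ edge (Sum.inl i.castSucc) (Sum.inr i.succ)).Adj (Sum.inr a) (Sum.inr b) ↔ a ≠ b := by
  simp [CCk, ccRel, edge_adj]

theorem sup_edge_adj_inl_inr (a b : Fin (k+1)) :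
    (CCk k ⊔ edge (Sum.inl i.castSucc) (Sum.inr i.succ)).Adj (Sum.inl a) (Sum.inr b) ↔
      b < a ∨ a = i.castSucc ∧ b = i.succ := by
  simp [CCk, ccRel, edge_adj]

theorem swap_lt_swap_or_iff (a b : Fin (k+1)) :
    Equiv.swap i.castSucc i.succ b < Equiv.swap i.castSucc i.succ a ∨
        Equiv.swap i.castSucc i.succ a = i.castSucc ∧ Equiv.swap i.castSucc i.succ b = i.succ ↔
      b < a ∨ a = i.castSucc ∧ b = i.succ := by
  simp only [Equiv.swap_apply_def]
  split_ifs <;> simp only [Fin.lt_def, Fin.ext_iff, Fin.val_castSucc, Fin.val_succ] at * <;> grind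

def swapRows : Equiv.Perm (Fin (k+1) ⊕ Fin (k+1)) :=
  Equiv.Perm.sumCongr (Equiv.swap i.castSucc i.succ) (Equiv.swap i.castSucc i.succ)

theorem swapCut_eq_image (S : Finset (Fin (k+1) ⊕ Fin (k+1))) :
    swapCut k S i = S.image (swapRows i) := by
  rw [swapCut, swapRows, ← Equiv.Perm.sumCongr_swap_one, ← Equiv.Perm.sumCongr_one_swap,
    ← Equiv.Perm.mul_def, Equiv.Perm.sumCongr_mul, one_mul, mul_one]

theorem swapRows_swapRows (x : Fin (k+1) ⊕ Fin (k+1)) : swapRows i (swapRows i x) = x := by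
  rcases x with a | a <;> simp [swapRows]

def swapRowsIso :
    CCk k ⊔ edge (Sum.inl i.castSucc) (Sum.inr i.succ) ≃g
      CCk k ⊔ edge (Sum.inl i.castSucc) (Sum.inr i.succ) where
  toEquiv := swapRows i
  map_rel_iff' {x y} := by
    rcases x with a | a <;> rcases y with b | b <;>
      simp only [swapRows, Equiv.Perm.sumCongr_apply, Sum.map_inl, Sum.map_inr]
    · rw [sup_edge_adj_inl_inl, sup_edge_adj_inl_inl, (Equiv.swap _ _).injective.ne_iff]
    · rw [sup_edge_adj_inl_inr, sup_edge_adj_inl_inr, swap_lt_swap_or_iff]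
    · rw [adj_comm, sup_edge_adj_inl_inr, swap_lt_swap_or_iff, adj_comm, sup_edge_adj_inl_inr]
    · rw [sup_edge_adj_inr_inr, sup_edge_adj_inr_inr, (Equiv.swap _ _).injective.ne_iff]

theorem mem_swapCut {S : Finset (Fin (k+1) ⊕ Fin (k+1))} {x : Fin (k+1) ⊕ Fin (k+1)} :
    x ∈ swapCut k S i ↔ swapRows i x ∈ S := by
  rw [swapCut_eq_image, ← (swapRows i).injective.mem_finset_image (a := swapRows i x),
    swapRows_swapRows]

theorem cutSize_swapCut_add (S : Finset (Fin (k+1) ⊕ Fin (k+1))) :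
    cutSize (CCk k) (swapCut k S i) +
        (if Sum.inl i.succ ∈ S ↔ Sum.inr i.castSucc ∈ S then 0 else 1) =
      cutSize (CCk k) S + (if Sum.inl i.castSucc ∈ S ↔ Sum.inr i.succ ∈ S then 0 else 1) := by
  have hnadj : ¬(CCk k).Adj (Sum.inl i.castSucc) (Sum.inr i.succ) := by
    simp [CCk, ccRel]
  have hiso : cutSize (CCk k ⊔ edge (Sum.inl i.castSucc) (Sum.inr i.succ)) (swapCut k S i) =
      cutSize (CCk k ⊔ edge (Sum.inl i.castSucc) (Sum.inr i.succ)) S := by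
    rw [swapCut_eq_image]
    exact cutSize_map_iso (swapRowsIso i) S
  rw [cutSize_sup_edge hnadj, cutSize_sup_edge hnadj] at hiso
  simpa [mem_swapCut, swapRows, Iff.comm] using hiso

end CCk

/-- If exactly one of rows `i`, `i+1` is monochromatic w.r.t. the cut `S` of `CC_k`, then
exactly one vertex `x` among `{v_i, v_{i+1}, v'_i, v'_{i+1}}` has a different `S`-membership
than the other three, and `cs(swap(S,i)) = cs(S) + 1` if `x ∈ {v_i, v'_{i+1}}`, while
`cs(swap(S,i)) = cs(S) − 1` if `x ∈ {v_{i+1}, v'_i}`. -/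
theorem cutSize_swapCut_of_mixed_kind (k : ℕ) (S : Finset (Fin (k+1) ⊕ Fin (k+1))) (i : Fin k)
    (h : ¬ (rowMono k S i.castSucc ↔ rowMono k S i.succ)) :
    ∃ x ∈ quad k i,
      (∀ y ∈ quad k i, y ≠ x → (y ∈ S ↔ x ∉ S)) ∧
      (∀ x' ∈ quad k i, (∀ y ∈ quad k i, y ≠ x' → (y ∈ S ↔ x' ∉ S)) → x' = x) ∧
      ((x = Sum.inl i.castSucc ∨ x = Sum.inr i.succ) →
        cutSize (CCk k) (swapCut k S i) = cutSize (CCk k) S + 1) ∧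
      ((x = Sum.inl i.succ ∨ x = Sum.inr i.castSucc) →
        cutSize (CCk k) (swapCut k S i) + 1 = cutSize (CCk k) S) := by
  have hne : i.castSucc ≠ i.succ := Fin.castSucc_lt_succ.ne
  have hcard : 3 ≤ #(quad k i) := by simp [quad, hne]
  obtain ⟨x, hxq, hx⟩ := exists_isOddOneOut_of_not_iff_iff h
  have hcount := CCk.cutSize_swapCut_add i S
  simp only [hx.mem_iff_mem_iff (y := Sum.inl i.succ) (z := Sum.inr i.castSucc) (by simp)
    (by simp) (by simp), hx.mem_iff_mem_iff (y := Sum.inl i.castSucc) (z := Sum.inr i.succ)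
    (by simp) (by simp) (by simp)] at hcount
  refine ⟨x, hxq, hx, fun x' hx'q hx' => hx.eq_of_three_le_card hcard hx'q hx', ?_, ?_⟩
  all_goals rintro (rfl | rfl) <;> simp [hne, hne.symm] at hcount <;> omega
end

section
/- For every natural number k there exist nonnegative integers x, y, z, t with x + y + z + t = k + 1 such that the pattern cut S(x,y,z,t) is a maximum cut of CC_k, i.e., its cut size equals the maximum cut size of CC_k. -/
/-- The maximum cut size of a finite simple graph `G`. -/
def maxCut {V : Type*} [Fintype V] [DecidableEq V] (G : SimpleGraph V) [DecidableRel G.Adj] : ℕ :=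
  Finset.univ.powerset.sup fun S => cutSize G S

/-- The pattern cut `S(x,y,z,t)` of `CC_k` (for `x+y+z+t = k+1`): `v_i ∈ S` iff
`i < x` or `i ≥ x+y+z`, and `v'_j ∈ S` iff `j < x+y`. -/
def patternCut (k x y z t : ℕ) : Finset (Fin (k+1) ⊕ Fin (k+1)) :=
  ((Finset.univ.filter fun i : Fin (k+1) => (i : ℕ) < x ∨ x + y + z ≤ (i : ℕ)).image Sum.inl) ∪
  ((Finset.univ.filter fun j : Fin (k+1) => (j : ℕ) < x + y).image Sum.inr)


/-!
Sort each index `i` into a class according to which of `v_i`, `v'_i` lie in the cut `S`: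
`0 = (in, in)`, `1 = (out, in)`, `2 = (out, out)`, `3 = (in, out)`, so that consecutive classes
mod 4 differ on exactly one side. With `N m` the class sizes and `B` the number of pairs `p < q`
whose classes step backwards around this 4-cycle (`c p = c q + 1`), counting cut edges gives
`2 cs(S) + 2 B + N 1 + N 3 = countForm (N 0) (N 1) (N 2) (N 3)`.

A pattern cut has monotone classes, so its `B` is `N 0 * N 3`. As `countForm` is invariant under
`N 0 ↔ N 2` and `N 1 ↔ N 3`, for each `m` some pattern cut has the same `countForm` and `N 1 + N 3`
as `S` and `B = N m * N (m + 1)`. Finally `B` is at least one of these four products: every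
quadruple `(p₀, p₁, p₂, p₃)` with `p_m` in class `m` contains a backward step, so double counting
gives `∏ N m ≤ ∑ B_m * N (m + 2) * N (m + 3)`.
-/

open Finset

section ClassCounting

variable {ι κ : Type*}

lemma exists_apply_add_one_lt [LinearOrder ι] {f : Fin 4 → ι} (hf : Function.Injective f) :
    ∃ m, f (m + 1) < f m := by
  by_contra! hle
  have hlt (m : Fin 4) : f m < f (m + 1) :=
    (hle m).lt_of_ne fun h => (by decide : ∀ m : Fin 4, m ≠ m + 1) m (hf h)
  exact lt_irrefl _ ((((hlt 0).trans (hlt 1)).trans (hlt 2)).trans (hlt 3))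

variable [Fintype ι]

def classCount [DecidableEq κ] (c : ι → κ) (m : κ) : ℕ := #{i | c i = m}

lemma sum_classCount [Fintype κ] [DecidableEq κ] (c : ι → κ) :
    ∑ m, classCount c m = Fintype.card ι :=
  (card_eq_sum_card_fiberwise fun i _ => mem_univ (c i)).symm

lemma sum_comp_eq_sum_classCount [Fintype κ] [DecidableEq κ] {M : Type*} [AddCommMonoid M]
    (c : ι → κ) (f : κ → M) : ∑ i, f (c i) = ∑ m, classCount c m • f m := by
  rw [← sum_fiberwise' univ c f]
  simp only [sum_const, classCount]

lemma sum_sum_comp_eq_sum_classCount [Fintype κ] [DecidableEq κ] {R : Type*} [CommSemiring R]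
    (c : ι → κ) (f : κ → κ → R) :
    ∑ i, ∑ j, f (c i) (c j) = ∑ m, ∑ m', (classCount c m * classCount c m' : ℕ) * f m m' := by
  simp_rw [sum_comp_eq_sum_classCount c (f (c _)),
    sum_comp_eq_sum_classCount c fun m => ∑ m', classCount c m' • f m m', nsmul_eq_mul, mul_sum,
    Nat.cast_mul, mul_assoc]

lemma two_nsmul_sum_lt_add_sum_diag [LinearOrder ι] {M : Type*} [AddCommMonoid M]
    (f : ι → ι → M) (hf : ∀ i j, f i j = f j i) :
    2 • ∑ i, ∑ j, (if i < j then f i j else 0) + ∑ i, f i i = ∑ i, ∑ j, f i j := by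
  have split (i j : ι) : f i j = (if i < j then f i j else 0) + (if j < i then f j i else 0)
      + (if i = j then f i i else 0) := by
    rcases lt_trichotomy i j with h | rfl | h
    · simp [h, h.ne, h.not_gt]
    · simp
    · simp [h, h.ne', h.not_gt, hf i j]
  conv_rhs => rw [sum_congr rfl fun i _ => sum_congr rfl fun j _ => split i j]
  simp only [sum_add_distrib, sum_ite_eq]
  rw [sum_comm (f := fun i j => if j < i then f j i else 0)]
  simp [two_nsmul]

variable [LinearOrder ι]

def backwardPairs (c : ι → Fin 4) (m : Fin 4) : ℕ :=
  #{p : ι × ι | p.1 < p.2 ∧ c p.1 = m + 1 ∧ c p.2 = m}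

def backwardCount (c : ι → Fin 4) : ℕ := #{p : ι × ι | p.1 < p.2 ∧ c p.1 = c p.2 + 1}

lemma backwardCount_eq_sum_backwardPairs (c : ι → Fin 4) :
    backwardCount c = ∑ m, backwardPairs c m := by
  rw [backwardCount, card_eq_sum_card_fiberwise (f := fun p => c p.2) (t := univ)
    fun _ _ => mem_univ _]
  refine sum_congr rfl fun m _ => congrArg card ?_
  ext ⟨p, q⟩
  simp only [mem_filter, mem_univ, true_and]
  constructor
  · rintro ⟨⟨hpq, h⟩, rfl⟩; exact ⟨hpq, h, rfl⟩
  · rintro ⟨hpq, h, rfl⟩; exact ⟨⟨hpq, h⟩, rfl⟩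

lemma prod_classCount_le (c : ι → Fin 4) :
    ∏ m, classCount c m ≤
      ∑ m, backwardPairs c m * (classCount c (m + 2) * classCount c (m + 3)) := by
  set Q := Fintype.piFinset fun m : Fin 4 => ({i | c i = m} : Finset ι)
  have hQ : ∀ f ∈ Q, ∀ m, c (f m) = m := fun f hf m => by
    simpa using Fintype.mem_piFinset.1 hf m
  calc ∏ m, classCount c m = #Q := (Fintype.card_piFinset _).symm
    _ ≤ #(univ.biUnion fun m => {f ∈ Q | f (m + 1) < f m}) := by
        refine card_le_card fun f hf => ?_
        obtain ⟨m, hm⟩ := exists_apply_add_one_lt (f := f) fun a b hab => by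
          simpa only [hQ f hf] using congrArg c hab
        exact mem_biUnion.2 ⟨m, mem_univ _, mem_filter.2 ⟨hf, hm⟩⟩
    _ ≤ ∑ m, #{f ∈ Q | f (m + 1) < f m} := card_biUnion_le
    _ ≤ _ := by
        refine sum_le_sum fun m _ => ?_
        rw [backwardPairs, classCount, classCount, ← card_product, ← card_product]
        refine card_le_card_of_injOn (fun f => ((f (m + 1), f m), f (m + 2), f (m + 3)))
          (fun f hf => ?_) fun f _ g _ hfg => ?_
        · obtain ⟨hfQ, hlt⟩ := mem_filter.1 hf
          simp [hlt, hQ f hfQ]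
        · simp only [Prod.mk.injEq] at hfg
          obtain ⟨⟨h1, h0⟩, h2, h3⟩ := hfg
          funext j
          obtain ⟨d, rfl⟩ : ∃ d, j = m + d := ⟨j - m, by abel⟩
          fin_cases d
          · simpa using h0
          · exact h1
          · exact h2
          · exact h3

lemma exists_mul_le_sum_of_prod_le (N B : Fin 4 → ℕ)
    (h : ∏ m, N m ≤ ∑ m, B m * (N (m + 2) * N (m + 3))) :
    ∃ m, N m * N (m + 1) ≤ ∑ m, B m := by
  obtain ⟨m₀, -, hmax⟩ := exists_max_image univ (fun m => N (m + 2) * N (m + 3)) univ_nonempty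
  refine ⟨m₀, ?_⟩
  have hprod : ∏ m, N m = N m₀ * N (m₀ + 1) * (N (m₀ + 2) * N (m₀ + 3)) := by
    fin_cases m₀ <;> simp [Fin.prod_univ_four] <;> ring
  have hsum : ∑ m, B m * (N (m + 2) * N (m + 3)) ≤ (∑ m, B m) * (N (m₀ + 2) * N (m₀ + 3)) := by
    rw [sum_mul]
    exact sum_le_sum fun m _ => Nat.mul_le_mul_left _ (hmax m (mem_univ _))
  rcases Nat.eq_zero_or_pos (N (m₀ + 2) * N (m₀ + 3)) with h0 | hpos
  · have hshift : m₀ + 2 + 2 = m₀ ∧ m₀ + 2 + 3 = m₀ + 1 := by fin_cases m₀ <;> decide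
    have := hmax (m₀ + 2) (mem_univ _)
    rw [hshift.1, hshift.2, h0] at this
    omega
  · exact Nat.le_of_mul_le_mul_right ((hprod ▸ h).trans hsum) hpos

lemma exists_classCount_mul_le_backwardCount (c : ι → Fin 4) :
    ∃ m, classCount c m * classCount c (m + 1) ≤ backwardCount c :=
  backwardCount_eq_sum_backwardPairs c ▸ exists_mul_le_sum_of_prod_le _ _ (prod_classCount_le c)

lemma backwardCount_eq_of_monotone {c : ι → Fin 4} (hc : Monotone c) :
    backwardCount c = classCount c 0 * classCount c 3 := by
  rw [backwardCount, classCount, classCount, ← card_product]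
  congr 1
  ext ⟨p, q⟩
  simp only [mem_filter, mem_univ, true_and, mem_product]
  constructor
  · rintro ⟨hpq, h⟩
    exact (by decide : ∀ α γ : Fin 4, α ≤ γ → α = γ + 1 → α = 0 ∧ γ = 3) _ _ (hc hpq.le) h
  · rintro ⟨hp, hq⟩
    refine ⟨lt_of_not_ge fun hqp => ?_, by rw [hp, hq]; rfl⟩
    have := hc hqp
    rw [hp, hq] at this
    exact absurd this (by decide)

end ClassCounting

section CutWeight

variable {ι : Type*} [Fintype ι] [LinearOrder ι]

def onLeft : Fin 4 → Bool := ![true, false, false, true]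

def onRight : Fin 4 → Bool := ![true, true, false, false]

def cliqueWeight (α γ : Fin 4) : ℕ :=
  (if onLeft α ∧ ¬onLeft γ then 1 else 0) + (if onRight α ∧ ¬onRight γ then 1 else 0)

def crossWeight (α γ : Fin 4) : ℕ :=
  (if onRight α ∧ ¬onLeft γ then 1 else 0) + (if onLeft γ ∧ ¬onRight α then 1 else 0)

/-- `cutSize` of `CC_k` in terms of the classes: for `i < j` the only edge between `{v_i, v'_i}`
and `{v_j, v'_j}` outside the two cliques is `v'_i v_j`. -/
def cutWeight (c : ι → Fin 4) : ℕ :=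
  ∑ i, ∑ j, (cliqueWeight (c i) (c j) + if i < j then crossWeight (c i) (c j) else 0)

def countForm (x y z t : ℕ) : ℕ := y ^ 2 + t ^ 2 + 4 * (x + z) * (y + t) + 6 * x * z + 4 * y * t

lemma two_mul_cutWeight_add_two_mul_backwardCount (c : ι → Fin 4) :
    2 * cutWeight c + 2 * backwardCount c + (classCount c 1 + classCount c 3) =
      countForm (classCount c 0) (classCount c 1) (classCount c 2) (classCount c 3) := by
  -- `crossWeight α γ - crossWeight γ α` is `1` for `γ = α + 1` and `-1` for `α = γ + 1`, so
  -- adding the backward indicator makes the cross weight symmetric.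
  let M (α γ : Fin 4) : ℕ := crossWeight α γ + if α = γ + 1 then 1 else 0
  have hMsymm : ∀ α γ, M α γ = M γ α := by decide
  have hM := two_nsmul_sum_lt_add_sum_diag (fun i j => M (c i) (c j)) fun i j => hMsymm _ _
  have hB : backwardCount c = ∑ i, ∑ j, if i < j then (if c i = c j + 1 then 1 else 0) else 0 := by
    rw [backwardCount, card_filter, Fintype.sum_prod_type]
    simp only [ite_and]
  have hsplit : cutWeight c + backwardCount c = ∑ i, ∑ j, cliqueWeight (c i) (c j) +
      ∑ i, ∑ j, (if i < j then M (c i) (c j) else 0) := by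
    rw [cutWeight, hB, ← sum_add_distrib, ← sum_add_distrib]
    refine sum_congr rfl fun i _ => ?_
    rw [← sum_add_distrib, ← sum_add_distrib]
    refine sum_congr rfl fun j _ => ?_
    by_cases h : i < j <;> simp [h, M, add_assoc]
  simp only [sum_sum_comp_eq_sum_classCount c, sum_comp_eq_sum_classCount c (fun α => M α α)]
    at hM hsplit
  simp only [Fin.sum_univ_four, M, cliqueWeight, crossWeight, onLeft, onRight, Matrix.cons_val,
    Matrix.cons_val_zero, Matrix.cons_val_one, Fin.reduceAdd, Fin.reduceEq, Fin.isValue,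
    Bool.not_eq_true, Bool.true_eq_false, Bool.false_eq_true, and_self, and_true, and_false,
    true_and, false_and, ↓reduceIte, left_eq_add, one_ne_zero, zero_ne_one, add_zero, zero_add,
    mul_zero, mul_one, mul_ite, smul_eq_mul, Nat.cast_mul, Nat.cast_id, Nat.reduceAdd] at hM hsplit
  unfold countForm
  linarith

end CutWeight

section CutClass

open Sum

variable {k : ℕ}

@[simp] lemma CCk_adj_inl_inl {i j : Fin (k + 1)} : (CCk k).Adj (inl i) (inl j) ↔ i ≠ j := by
  simp [CCk, ccRel]

@[simp] lemma CCk_adj_inl_inr {i j : Fin (k + 1)} : (CCk k).Adj (inl i) (inr j) ↔ j < i := by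
  simp [CCk, ccRel]

@[simp] lemma CCk_adj_inr_inl {i j : Fin (k + 1)} : (CCk k).Adj (inr i) (inl j) ↔ i < j := by
  simp [CCk, ccRel]

@[simp] lemma CCk_adj_inr_inr {i j : Fin (k + 1)} : (CCk k).Adj (inr i) (inr j) ↔ i ≠ j := by
  simp [CCk, ccRel]

def cutClass {n : ℕ} (S : Finset (Fin n ⊕ Fin n)) (i : Fin n) : Fin 4 :=
  if inl i ∈ S then (if inr i ∈ S then 0 else 3) else (if inr i ∈ S then 1 else 2)

@[simp] lemma onLeft_cutClass {n : ℕ} (S : Finset (Fin n ⊕ Fin n)) (i : Fin n) :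
    onLeft (cutClass S i) = decide (inl i ∈ S) := by
  unfold cutClass; split_ifs <;> simp_all [onLeft]

@[simp] lemma onRight_cutClass {n : ℕ} (S : Finset (Fin n ⊕ Fin n)) (i : Fin n) :
    onRight (cutClass S i) = decide (inr i ∈ S) := by
  unfold cutClass; split_ifs <;> simp_all [onRight]

lemma cutSize_CCk_eq_cutWeight (S : Finset (Fin (k + 1) ⊕ Fin (k + 1))) :
    cutSize (CCk k) S = cutWeight (cutClass S) := by
  rw [cutSize, card_filter, Fintype.sum_prod_type]
  simp only [Fintype.sum_sum_type, CCk_adj_inl_inl, CCk_adj_inl_inr, CCk_adj_inr_inl,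
    CCk_adj_inr_inr, sum_add_distrib]
  rw [sum_comm (f := fun i j => if j < i ∧ inl i ∈ S ∧ inr j ∉ S then 1 else 0)]
  simp only [cutWeight, cliqueWeight, crossWeight, onLeft_cutClass, onRight_cutClass,
    decide_eq_true_eq, ← sum_add_distrib]
  refine sum_congr rfl fun i _ => sum_congr rfl fun j _ => ?_
  rcases eq_or_ne i j with rfl | hij
  · simp
  · by_cases h : i < j
    · simp only [ne_eq, hij, not_false_eq_true, true_and, h, ↓reduceIte]
      omega
    · simp [hij, h]

lemma Fin.card_filter_val_mem_Ico {n a b : ℕ} (hb : b ≤ n) :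
    #{i : Fin n | a ≤ (i : ℕ) ∧ (i : ℕ) < b} = b - a := by
  rw [← Nat.card_Ico, ← card_map Fin.valEmbedding]
  congr 1
  ext m
  simp only [mem_map, mem_filter, mem_univ, true_and, Fin.valEmbedding_apply, mem_Ico]
  exact ⟨by rintro ⟨i, hi, rfl⟩; exact hi, fun hm => ⟨⟨m, by omega⟩, hm, rfl⟩⟩

variable {x y z t : ℕ}

lemma cutClass_patternCut (i : Fin (k + 1)) :
    cutClass (patternCut k x y z t) i =
      if (i : ℕ) < x then 0 else if (i : ℕ) < x + y then 1 else if (i : ℕ) < x + y + z then 2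
      else 3 := by
  simp only [cutClass, patternCut, mem_union, mem_image, mem_filter, mem_univ, true_and,
    inl.injEq, inr.injEq, reduceCtorEq, and_false, exists_false, or_false, false_or,
    exists_eq_right]
  split_ifs <;> first | rfl | omega

lemma monotone_cutClass_patternCut : Monotone (cutClass (patternCut k x y z t)) := by
  intro i j hij
  have : (i : ℕ) ≤ j := hij
  simp only [cutClass_patternCut]
  split_ifs <;> first | decide | omega

lemma classCount_cutClass_patternCut (h : x + y + z + t = k + 1) :
    classCount (cutClass (patternCut k x y z t)) = ![x, y, z, t] := by
  funext m
  let lo : Fin 4 → ℕ := ![0, x, x + y, x + y + z]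
  let hi : Fin 4 → ℕ := ![x, x + y, x + y + z, k + 1]
  have hm (i : Fin (k + 1)) : cutClass (patternCut k x y z t) i = m ↔ lo m ≤ i ∧ i < hi m := by
    rw [cutClass_patternCut]
    fin_cases m <;> simp only [lo, hi] <;> split_ifs <;> simp <;> omega
  have hhi : hi m ≤ k + 1 := by fin_cases m <;> simp [hi, ← h, add_assoc]
  rw [classCount, filter_congr fun i _ => hm i, Fin.card_filter_val_mem_Ico hhi]
  fin_cases m <;> simp [lo, hi, ← h]

lemma two_mul_cutSize_patternCut (h : x + y + z + t = k + 1) :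
    2 * cutSize (CCk k) (patternCut k x y z t) + 2 * (x * t) + (y + t) = countForm x y z t := by
  have := two_mul_cutWeight_add_two_mul_backwardCount (cutClass (patternCut k x y z t))
  rw [backwardCount_eq_of_monotone monotone_cutClass_patternCut,
    classCount_cutClass_patternCut h] at this
  simpa [cutSize_CCk_eq_cutWeight] using this

lemma cutSize_le_cutSize_patternCut {S : Finset (Fin (k + 1) ⊕ Fin (k + 1))}
    {c : Fin (k + 1) → Fin 4} (hc : cutClass S = c) (h : x + y + z + t = k + 1)
    (hform : countForm x y z t =
      countForm (classCount c 0) (classCount c 1) (classCount c 2) (classCount c 3))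
    (hyt : y + t = classCount c 1 + classCount c 3) (hxt : x * t ≤ backwardCount c) :
    cutSize (CCk k) S ≤ cutSize (CCk k) (patternCut k x y z t) := by
  have hS := two_mul_cutWeight_add_two_mul_backwardCount c
  have hP := two_mul_cutSize_patternCut h
  have hcut : cutSize (CCk k) S = cutWeight c := hc ▸ cutSize_CCk_eq_cutWeight S
  omega

lemma exists_patternCut_cutSize_ge (S : Finset (Fin (k + 1) ⊕ Fin (k + 1))) :
    ∃ x y z t, x + y + z + t = k + 1 ∧
      cutSize (CCk k) S ≤ cutSize (CCk k) (patternCut k x y z t) := by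
  obtain ⟨m, hm⟩ := exists_classCount_mul_le_backwardCount (cutClass S)
  have hN := sum_classCount (cutClass S)
  generalize hc : cutClass S = c at hm hN
  simp only [Fin.sum_univ_four, Fintype.card_fin] at hN
  fin_cases m <;> simp only [Fin.reduceFinMk, Fin.reduceAdd, Fin.isValue] at hm
  · exact ⟨classCount c 0, classCount c 3, classCount c 2, classCount c 1, by omega,
      cutSize_le_cutSize_patternCut hc (by omega) (by unfold countForm; ring) (by omega) hm⟩
  · exact ⟨classCount c 2, classCount c 3, classCount c 0, classCount c 1, by omega,
      cutSize_le_cutSize_patternCut hc (by omega) (by unfold countForm; ring) (by omega)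
        (by rwa [mul_comm])⟩
  · exact ⟨classCount c 2, classCount c 1, classCount c 0, classCount c 3, by omega,
      cutSize_le_cutSize_patternCut hc (by omega) (by unfold countForm; ring) (by omega) hm⟩
  · exact ⟨classCount c 0, classCount c 1, classCount c 2, classCount c 3, by omega,
      cutSize_le_cutSize_patternCut hc (by omega) rfl rfl (by rwa [mul_comm])⟩

end CutClass

/-- For every `k` there are nonnegative integers `x, y, z, t` with `x+y+z+t = k+1` such that
the pattern cut `S(x,y,z,t)` is a maximum cut of `CC_k`. -/
theorem CCk_exists_pattern_max_cut (k : ℕ) :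
    ∃ x y z t : ℕ, x + y + z + t = k + 1 ∧
      cutSize (CCk k) (patternCut k x y z t) = maxCut (CCk k) := by
  obtain ⟨S, -, hS⟩ := exists_mem_eq_sup (univ : Finset (Fin (k + 1) ⊕ Fin (k + 1))).powerset
    ⟨∅, empty_mem_powerset _⟩ (cutSize (CCk k))
  have hmax : maxCut (CCk k) = cutSize (CCk k) S := hS
  obtain ⟨x, y, z, t, h, hle⟩ := exists_patternCut_cutSize_ge S
  exact ⟨x, y, z, t, h, le_antisymm (le_sup (mem_powerset.2 (subset_univ _))) (hmax ▸ hle)⟩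
end
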